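/- Let 𝕂 be ℝ or ℂ, V a 𝕂-vector space, U : V³ → 𝕂 an arbitrary trilinear map, ε ∈ {1,−1}, and W : V² → 𝕂 a bilinear map satisfying W(y,x) = ε·W(x,y) for all x,y ∈ V. Define the 5-linear maps U⊗W : (v₁,…,v₅) ↦ U(v₁,v₂,v₃)·W(v₄,v₅) and W⊗U : (v₁,…,v₅) ↦ W(v₁,v₂)·U(v₃,v₄,v₅). Then y_{t'}*(U⊗W) = ε·y_{t'}*(W⊗U). -/

import Mathlib

/-- The action of a group-algebra element `a ∈ 𝕂[S_r]` on an `r`-linear map: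
`(aT)(v₁,…,v_r) = Σ_p a(p)·T(v_{p(1)},…,v_{p(r)})`. -/
noncomputable def gaAct {𝕂 : Type*} [RCLike 𝕂] {V : Type*} [AddCommGroup V] [Module 𝕂 V]
    {r : ℕ} (a : MonoidAlgebra 𝕂 (Equiv.Perm (Fin r)))
    (T : MultilinearMap 𝕂 (fun _ : Fin r => V) 𝕂) :
    MultilinearMap 𝕂 (fun _ : Fin r => V) 𝕂 :=
  ∑ p : Equiv.Perm (Fin r), a.coeff p • T.domDomCongr p

/-- The star map `a = Σ_p a(p)·p ↦ a* = Σ_p a(p)·p⁻¹` on the group algebra. -/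
noncomputable def gaStar {𝕂 : Type*} [RCLike 𝕂] {r : ℕ}
    (a : MonoidAlgebra 𝕂 (Equiv.Perm (Fin r))) : MonoidAlgebra 𝕂 (Equiv.Perm (Fin r)) :=
  ∑ p : Equiv.Perm (Fin r), MonoidAlgebra.single p⁻¹ (a.coeff p)

/-- The horizontal group `H_{t'}` of the tableau `t'` with rows `(1,3,5)` and `(2,4)`
(0-based: rows `{0,2,4}` and `{1,3}`): all permutations mapping each row to itself. -/
def horizT' : Finset (Equiv.Perm (Fin 5)) :=
  Finset.univ.filter fun p =>
    (∀ i ∈ ({0, 2, 4} : Finset (Fin 5)), p i ∈ ({0, 2, 4} : Finset (Fin 5))) ∧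
    (∀ i ∈ ({1, 3} : Finset (Fin 5)), p i ∈ ({1, 3} : Finset (Fin 5)))

/-- The vertical group `V_{t'}` of `t'`: all permutations mapping each of the columns
`{1,2}` and `{3,4}` (0-based `{0,1}`, `{2,3}`) to itself and fixing `5` (0-based `4`). -/
def vertT' : Finset (Equiv.Perm (Fin 5)) :=
  Finset.univ.filter fun p =>
    (∀ i ∈ ({0, 1} : Finset (Fin 5)), p i ∈ ({0, 1} : Finset (Fin 5))) ∧
    (∀ i ∈ ({2, 3} : Finset (Fin 5)), p i ∈ ({2, 3} : Finset (Fin 5))) ∧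
    p 4 = 4

/-- The Young symmetrizer `y_{t'} = Σ_{p∈H_{t'}} Σ_{q∈V_{t'}} sign(q)·(p∘q)`. -/
noncomputable def youngT' (𝕂 : Type*) [RCLike 𝕂] : MonoidAlgebra 𝕂 (Equiv.Perm (Fin 5)) :=
  ∑ p ∈ horizT', ∑ q ∈ vertT',
    MonoidAlgebra.single (p * q) (((Equiv.Perm.sign q : ℤ) : 𝕂))


/-!
Let `σ` be the permutation with `v ∘ σ = (v₄, v₃, v₀, v₁, v₂)`. By the symmetry of `W`,
`U⊗W = ε • (W⊗U) ∘ σ`, and `σ` lies in the horizontal group `H_{t'}`, since it maps each row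
of `t'` to itself. Under the star map, precomposition with an element of `H_{t'}` becomes a left
translation of the `H_{t'}`-summation index of the Young symmetrizer, so it does not change
`y_{t'}*(·)`.
-/

namespace MultilinearMap

variable {R : Type*} [CommSemiring R] {M N : Type*} [AddCommMonoid M] [Module R M]
  [AddCommMonoid N] [Module R N] {ι : Type*}

lemma domDomCongr_domDomCongr_perm (f : MultilinearMap R (fun _ : ι => M) N)
    (σ τ : Equiv.Perm ι) : (f.domDomCongr σ).domDomCongr τ = f.domDomCongr (τ * σ) :=
  (domDomCongr_trans σ τ f).symm

end MultilinearMap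

section GroupAlgebraAction

variable {𝕂 : Type*} [RCLike 𝕂] {V : Type*} [AddCommGroup V] [Module 𝕂 V] {r : ℕ}

lemma gaStar_single (g : Equiv.Perm (Fin r)) (c : 𝕂) :
    gaStar (MonoidAlgebra.single g c) = MonoidAlgebra.single g⁻¹ c := by
  simp [gaStar, MonoidAlgebra.coeff_single, Finsupp.single_apply,
    apply_ite (MonoidAlgebra.single _)]

lemma gaStar_sum {ι : Type*} (s : Finset ι) (f : ι → MonoidAlgebra 𝕂 (Equiv.Perm (Fin r))) :
    gaStar (∑ i ∈ s, f i) = ∑ i ∈ s, gaStar (f i) := by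
  unfold gaStar
  rw [Finset.sum_comm]
  refine Finset.sum_congr rfl fun p _ => ?_
  rw [MonoidAlgebra.coeff_sum, Finsupp.finsetSum_apply]
  exact map_sum (MonoidAlgebra.singleAddHom p⁻¹) (fun i => (f i).coeff p) s

lemma gaAct_single (g : Equiv.Perm (Fin r)) (c : 𝕂)
    (T : MultilinearMap 𝕂 (fun _ : Fin r => V) 𝕂) :
    gaAct (MonoidAlgebra.single g c) T = c • T.domDomCongr g := by
  simp [gaAct, MonoidAlgebra.coeff_single, Finsupp.single_apply]

lemma gaAct_sum {ι : Type*} (s : Finset ι) (f : ι → MonoidAlgebra 𝕂 (Equiv.Perm (Fin r)))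
    (T : MultilinearMap 𝕂 (fun _ : Fin r => V) 𝕂) :
    gaAct (∑ i ∈ s, f i) T = ∑ i ∈ s, gaAct (f i) T := by
  simp only [gaAct, MonoidAlgebra.coeff_sum, Finsupp.finsetSum_apply, Finset.sum_smul]
  exact Finset.sum_comm

lemma gaAct_smul (a : MonoidAlgebra 𝕂 (Equiv.Perm (Fin r))) (c : 𝕂)
    (T : MultilinearMap 𝕂 (fun _ : Fin r => V) 𝕂) :
    gaAct a (c • T) = c • gaAct a T := by
  ext v
  simp only [gaAct, sum_apply, smul_apply,
    MultilinearMap.domDomCongr_apply, Finset.smul_sum, smul_comm c]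

/-- Precomposition with `c` is absorbed by the substitution `p ↦ c⁻¹ ∘ p`,
since `(p∘q)⁻¹ ∘ c = (c⁻¹∘p∘q)⁻¹`. -/
lemma gaAct_gaStar_sum_mul_domDomCongr (H Q : Finset (Equiv.Perm (Fin r)))
    (f : Equiv.Perm (Fin r) → 𝕂) (c : Equiv.Perm (Fin r))
    (hc : ∀ p ∈ H, c * p ∈ H) (hc_inv : ∀ p ∈ H, c⁻¹ * p ∈ H)
    (T : MultilinearMap 𝕂 (fun _ : Fin r => V) 𝕂) :
    gaAct (gaStar (∑ p ∈ H, ∑ q ∈ Q, MonoidAlgebra.single (p * q) (f q))) (T.domDomCongr c) =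
      gaAct (gaStar (∑ p ∈ H, ∑ q ∈ Q, MonoidAlgebra.single (p * q) (f q))) T := by
  simp only [gaStar_sum, gaAct_sum, gaStar_single, gaAct_single,
    MultilinearMap.domDomCongr_domDomCongr_perm]
  refine Finset.sum_nbij' (c⁻¹ * ·) (c * ·) hc_inv hc (fun p _ => by group)
    (fun p _ => by group) fun p _ => Finset.sum_congr rfl fun q _ => ?_
  simp only [mul_inv_rev, inv_inv, mul_assoc]

end GroupAlgebraAction

lemma mul_mem_horizT' {p q : Equiv.Perm (Fin 5)} (hp : p ∈ horizT') (hq : q ∈ horizT') :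
    p * q ∈ horizT' := by
  simp only [horizT', Finset.mem_filter, Finset.mem_univ, true_and] at hp hq ⊢
  exact ⟨fun i hi => hp.1 _ (hq.1 i hi), fun i hi => hp.2 _ (hq.2 i hi)⟩

/-- The permutation with `v ∘ blockSwapT' = (v₄, v₃, v₀, v₁, v₂)`. -/
def blockSwapT' : Equiv.Perm (Fin 5) :=
  ⟨![4, 3, 0, 1, 2], ![2, 3, 4, 1, 0], by decide, by decide⟩

lemma blockSwapT'_mem_horizT' : blockSwapT' ∈ horizT' := by
  simp only [horizT', Finset.mem_filter, Finset.mem_univ, true_and]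
  decide

lemma blockSwapT'_inv_mem_horizT' : blockSwapT'⁻¹ ∈ horizT' := by
  simp only [horizT', Finset.mem_filter, Finset.mem_univ, true_and]
  decide

lemma gaAct_gaStar_youngT'_domDomCongr_blockSwapT' {𝕂 : Type*} [RCLike 𝕂] {V : Type*}
    [AddCommGroup V] [Module 𝕂 V] (T : MultilinearMap 𝕂 (fun _ : Fin 5 => V) 𝕂) :
    gaAct (gaStar (youngT' 𝕂)) (T.domDomCongr blockSwapT') = gaAct (gaStar (youngT' 𝕂)) T :=
  gaAct_gaStar_sum_mul_domDomCongr _ _ _ _ (fun _ => mul_mem_horizT' blockSwapT'_mem_horizT')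
    (fun _ => mul_mem_horizT' blockSwapT'_inv_mem_horizT') T

theorem stmt6_general {𝕂 : Type*} [RCLike 𝕂] {V : Type*} [AddCommGroup V] [Module 𝕂 V]
    (U : MultilinearMap 𝕂 (fun _ : Fin 3 => V) 𝕂)
    (ε : 𝕂)
    (W : MultilinearMap 𝕂 (fun _ : Fin 2 => V) 𝕂)
    (hW : ∀ x y : V, W ![y, x] = ε * W ![x, y])
    (TUW TWU : MultilinearMap 𝕂 (fun _ : Fin 5 => V) 𝕂)
    (hTUW : ∀ v : Fin 5 → V, TUW v = U ![v 0, v 1, v 2] * W ![v 3, v 4])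
    (hTWU : ∀ v : Fin 5 → V, TWU v = W ![v 0, v 1] * U ![v 2, v 3, v 4]) :
    gaAct (gaStar (youngT' 𝕂)) TUW = ε • gaAct (gaStar (youngT' 𝕂)) TWU := by
  have hTUW_eq : TUW = ε • TWU.domDomCongr blockSwapT' := by
    ext v
    rw [smul_apply, MultilinearMap.domDomCongr_apply, hTUW, hTWU, hW (v 4) (v 3)]
    change _ = ε * (W ![v 4, v 3] * U ![v 0, v 1, v 2])
    ring
  rw [hTUW_eq, gaAct_smul, gaAct_gaStar_youngT'_domDomCongr_blockSwapT']

/-- If `W(y,x) = ε·W(x,y)` with `ε = ±1`, then `y_{t'}*(U⊗W) = ε·y_{t'}*(W⊗U)`. -/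
theorem stmt6 {𝕂 : Type*} [RCLike 𝕂] {V : Type*} [AddCommGroup V] [Module 𝕂 V]
    (U : MultilinearMap 𝕂 (fun _ : Fin 3 => V) 𝕂)
    (ε : 𝕂) (hε : ε = 1 ∨ ε = -1)
    (W : MultilinearMap 𝕂 (fun _ : Fin 2 => V) 𝕂)
    (hW : ∀ x y : V, W ![y, x] = ε * W ![x, y])
    (TUW TWU : MultilinearMap 𝕂 (fun _ : Fin 5 => V) 𝕂)
    (hTUW : ∀ v : Fin 5 → V, TUW v = U ![v 0, v 1, v 2] * W ![v 3, v 4])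
    (hTWU : ∀ v : Fin 5 → V, TWU v = W ![v 0, v 1] * U ![v 2, v 3, v 4]) :
    gaAct (gaStar (youngT' 𝕂)) TUW = ε • gaAct (gaStar (youngT' 𝕂)) TWU :=
  stmt6_general U ε W hW TUW TWU hTUW hTWU
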